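/- arXiv:2206.01933 — 5 statements merged into one kernel-verified Lean document; each statement's English description precedes it below -/
import Mathlib

section
/- Let K = {x ∈ ℝ² : θ_m < arg(x₁ + i x₂) < θ_M} be an open planar sector with -π < θ_m < θ_M < π, and let d, d⊥ ∈ S¹ be orthogonal unit vectors such that d · x̂ > ζ > 0 for all unit vectors x̂ in the closure of K ∩ S¹. Set ρ = -τ(d + i d⊥) for τ > 0. Then for every t > 0 there is a constant C = C(t, ζ) such that the L^t norm of e^{ρ·x} over the truncated sector S_h = K ∩ B_h satisfies ‖e^{ρ·x}‖_{L^t(S_h)} ≤ C (τ^{-2} + τ^{-1} e^{-(t/2) ζ h τ})^{1/t} for all sufficiently large τ. -/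
open MeasureTheory Set
open scoped RealInnerProductSpace

/-!
On a sector `K` (a cone) the separation hypothesis on unit directions scales to
`ζ ‖x‖ ≤ ⟪d, x⟫`, so `|e^{ρ·x}|^t = e^{-tτ⟪d, x⟫} ≤ e^{-tζτ‖x‖}` on `K`. Integrating this
majorant over all of `ℝ²` and substituting `x ↦ x / (tζτ)` bounds the integral by
`(tζτ)⁻² ∫ e^{-‖x‖}`, which is the `τ⁻²` term of the estimate.
-/

section ExpDecay

variable {E : Type*} [NormedAddCommGroup E] [NormedSpace ℝ E] [FiniteDimensional ℝ E]
  [MeasurableSpace E] [BorelSpace E] (μ : Measure E) [μ.IsAddHaarMeasure]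

theorem integrable_exp_neg_norm : Integrable (fun x : E => Real.exp (-‖x‖)) μ := by
  rcases subsingleton_or_nontrivial E with _ | _
  · exact .of_subsingleton
  · rw [integrable_fun_norm_addHaar μ (f := fun r => Real.exp (-r))]
    refine (Real.GammaIntegral_convergent (s := Module.finrank ℝ E)
      (by simp [Module.finrank_pos])).congr_fun (fun r _ => ?_) measurableSet_Ioi
    rw [smul_eq_mul, mul_comm, ← Real.rpow_natCast, Nat.cast_sub Module.finrank_pos, Nat.cast_one]

end ExpDecay

section Cone

variable {E : Type*} [NormedAddCommGroup E] [InnerProductSpace ℝ E]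

theorem mul_norm_le_inner_of_smul_mem {K : Set E} (hK : ∀ x ∈ K, ∀ r : ℝ, 0 < r → r • x ∈ K)
    {d : E} {ζ : ℝ} (hsep : ∀ x ∈ K, ‖x‖ = 1 → ζ < ⟪d, x⟫) {x : E} (hx : x ∈ K) :
    ζ * ‖x‖ ≤ ⟪d, x⟫ := by
  rcases eq_or_ne x 0 with rfl | hx0
  · simp
  have hn : 0 < ‖x‖ := norm_pos_iff.2 hx0
  have hunit := hsep _ (hK x hx _ (inv_pos.2 hn)) (norm_smul_inv_norm hx0)
  rw [real_inner_smul_right, ← div_eq_inv_mul, lt_div_iff₀ hn] at hunit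
  exact hunit.le

variable [FiniteDimensional ℝ E] [MeasurableSpace E] [BorelSpace E] (μ : Measure E)
  [μ.IsAddHaarMeasure]

theorem setIntegral_exp_neg_inner_le {S : Set E} (hS : MeasurableSet S) {d : E} {ζ c : ℝ}
    (hζ : 0 < ζ) (hc : 0 < c) (hcone : ∀ x ∈ S, ζ * ‖x‖ ≤ ⟪d, x⟫) :
    ∫ x in S, Real.exp (-c * ⟪d, x⟫) ∂μ ≤
      ((c * ζ) ^ Module.finrank ℝ E)⁻¹ * ∫ x, Real.exp (-‖x‖) ∂μ := by
  have hcζ : 0 < c * ζ := mul_pos hc hζ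
  have hint : Integrable (fun x : E => Real.exp (-‖(c * ζ) • x‖)) μ :=
    (integrable_exp_neg_norm μ).comp_smul hcζ.ne'
  calc ∫ x in S, Real.exp (-c * ⟪d, x⟫) ∂μ
      ≤ ∫ x in S, Real.exp (-‖(c * ζ) • x‖) ∂μ := by
        refine integral_mono_of_nonneg (.of_forall fun x => (Real.exp_pos _).le) hint.integrableOn
          (ae_restrict_of_forall_mem hS fun x hx => Real.exp_le_exp.2 ?_)
        rw [norm_smul, Real.norm_of_nonneg hcζ.le, mul_assoc]
        nlinarith [hcone x hx]
    _ ≤ ∫ x, Real.exp (-‖(c * ζ) • x‖) ∂μ :=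
        setIntegral_le_integral hint (.of_forall fun x => (Real.exp_pos _).le)
    _ = ((c * ζ) ^ Module.finrank ℝ E)⁻¹ * ∫ x, Real.exp (-‖x‖) ∂μ := by
        rw [Measure.integral_comp_smul μ (fun x => Real.exp (-‖x‖)), smul_eq_mul,
          abs_of_pos (by positivity)]

end Cone

theorem Complex.norm_exp_neg_mul_rpow (τ a b t : ℝ) :
    ‖Complex.exp (-(τ : ℂ) * ((a : ℂ) + (b : ℂ) * Complex.I))‖ ^ t = Real.exp (-(τ * t) * a) := by
  have hre : (-(τ : ℂ) * ((a : ℂ) + (b : ℂ) * Complex.I)).re = -τ * a := by simp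
  rw [Complex.norm_exp, hre, ← Real.exp_mul]
  congr 1
  ring

theorem arg_smul_coords {x : EuclideanSpace ℝ (Fin 2)} {r : ℝ} (hr : 0 < r) :
    Complex.arg (((r • x) 0 : ℂ) + ((r • x) 1 : ℂ) * Complex.I) =
      Complex.arg ((x 0 : ℂ) + (x 1 : ℂ) * Complex.I) := by
  have hcoords : (((r • x) 0 : ℝ) : ℂ) + ((r • x) 1 : ℂ) * Complex.I =
      r * ((x 0 : ℂ) + (x 1 : ℂ) * Complex.I) := by
    simp only [PiLp.smul_apply, smul_eq_mul]
    push_cast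
    ring
  rw [hcoords, Complex.arg_real_mul _ hr]

theorem Lt_estimate_sector_general (θm θM : ℝ)
    (K : Set (EuclideanSpace ℝ (Fin 2)))
    (hK : K = {x | θm < Complex.arg ((x 0 : ℂ) + (x 1 : ℂ) * Complex.I) ∧
                   Complex.arg ((x 0 : ℂ) + (x 1 : ℂ) * Complex.I) < θM})
    (d dp : EuclideanSpace ℝ (Fin 2)) (ζ : ℝ) (hζ : 0 < ζ)
    (hsep : ∀ x ∈ closure K, ‖x‖ = 1 → ζ < ⟪d, x⟫)
    (h : ℝ) (t : ℝ) (ht : 0 < t) :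
    ∃ C > 0, ∃ T : ℝ, ∀ τ : ℝ, T ≤ τ →
      (∫ x in K ∩ Metric.ball 0 h,
          ‖Complex.exp (-(τ : ℂ) * ((⟪d, x⟫ : ℂ) + (⟪dp, x⟫ : ℂ) * Complex.I))‖ ^ t) ^ (1 / t)
        ≤ C * (1 / τ ^ 2 + (1 / τ) * Real.exp (-(t / 2) * ζ * h * τ)) ^ (1 / t) := by
  have hKmeas : MeasurableSet K := by
    subst hK
    measurability
  have hcone : ∀ x ∈ K, ζ * ‖x‖ ≤ ⟪d, x⟫ := by
    refine fun x => mul_norm_le_inner_of_smul_mem (fun x hx r hr => ?_)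
      fun x hx => hsep x (subset_closure hx)
    rw [hK] at hx ⊢
    simpa only [mem_ofPred_eq, arg_smul_coords hr] using hx
  set I := ∫ x : EuclideanSpace ℝ (Fin 2), Real.exp (-‖x‖)
  have hI : 0 < I := integral_exp_pos (integrable_exp_neg_norm volume)
  refine ⟨(I / (t * ζ) ^ 2) ^ (1 / t), by positivity, 1, fun τ hτ => ?_⟩
  have hτ0 : 0 < τ := zero_lt_one.trans_le hτ
  have hbound : ∫ x in K ∩ Metric.ball 0 h,
      ‖Complex.exp (-(τ : ℂ) * ((⟪d, x⟫ : ℂ) + (⟪dp, x⟫ : ℂ) * Complex.I))‖ ^ t ≤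
        I / (t * ζ) ^ 2 * (1 / τ ^ 2 + (1 / τ) * Real.exp (-(t / 2) * ζ * h * τ)) := by
    simp_rw [Complex.norm_exp_neg_mul_rpow]
    calc _ ≤ (((τ * t) * ζ) ^ 2)⁻¹ * I := by
          simpa using setIntegral_exp_neg_inner_le volume (hKmeas.inter measurableSet_ball) hζ
            (by positivity) fun x hx => hcone x hx.1
      _ = I / (t * ζ) ^ 2 * (1 / τ ^ 2) := by field_simp
      _ ≤ _ := by gcongr; exact le_add_of_nonneg_right (by positivity)
  calc _ ≤ (I / (t * ζ) ^ 2 * (1 / τ ^ 2 + (1 / τ) * Real.exp (-(t / 2) * ζ * h * τ))) ^ (1 / t) :=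
        Real.rpow_le_rpow (integral_nonneg fun x => by positivity) hbound (by positivity)
    _ = _ := Real.mul_rpow (by positivity) (by positivity)

/-- `L^t` estimate of the CGO phase `e^{ρ·x}`, `ρ = -τ(d + i d⊥)`, over a truncated
planar sector `S_h = K ∩ B_h`, where `d · x̂ > ζ > 0` for all unit directions `x̂` in
the closure of the sector: for every `t > 0` there is `C = C(t, ζ)` with
`‖e^{ρ·x}‖_{L^t(S_h)} ≤ C (τ^{-2} + τ^{-1} e^{-(t/2)ζhτ})^{1/t}` for large `τ`. -/
theorem Lt_estimate_sector (θm θM : ℝ) (hm : -Real.pi < θm) (hmM : θm < θM)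
    (hM : θM < Real.pi)
    (K : Set (EuclideanSpace ℝ (Fin 2)))
    (hK : K = {x | θm < Complex.arg ((x 0 : ℂ) + (x 1 : ℂ) * Complex.I) ∧
                   Complex.arg ((x 0 : ℂ) + (x 1 : ℂ) * Complex.I) < θM})
    (d dp : EuclideanSpace ℝ (Fin 2)) (hd : ‖d‖ = 1) (hdp : ‖dp‖ = 1)
    (horth : ⟪d, dp⟫ = 0) (ζ : ℝ) (hζ : 0 < ζ)
    (hsep : ∀ x ∈ closure K, ‖x‖ = 1 → ζ < ⟪d, x⟫)
    (h : ℝ) (hh : 0 < h) (t : ℝ) (ht : 0 < t) :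
    ∃ C > 0, ∃ T : ℝ, ∀ τ : ℝ, T ≤ τ →
      (∫ x in K ∩ Metric.ball 0 h,
          ‖Complex.exp (-(τ : ℂ) * ((⟪d, x⟫ : ℂ) + (⟪dp, x⟫ : ℂ) * Complex.I))‖ ^ t) ^ (1 / t)
        ≤ C * (1 / τ ^ 2 + (1 / τ) * Real.exp (-(t / 2) * ζ * h * τ)) ^ (1 / t) :=
  Lt_estimate_sector_general θm θM K hK d dp ζ hζ hsep h t ht
end

section
/- Let K be an open planar sector as above with boundary rays Γ± (the rays at angles θ_m and θ_M), and let d, d⊥, ρ = -τ(d + i d⊥) satisfy d · x̂ > ζ > 0 for all x̂ ∈ K̄ ∩ S¹. Then for every t > 0 there is C = C(t, ζ) with ‖e^{ρ·x}‖_{L^t(Γ_h^±)} ≤ C (τ^{-1} + τ^{-1} e^{-(t/2) ζ h τ})^{1/t} for sufficiently large τ, where Γ_h^± = Γ^± ∩ B_h. -/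
open MeasureTheory Set
open scoped RealInnerProductSpace

/-!
On the ray at angle `θ` the phase has modulus `|e^{ρ·(r x̂)}| = e^{-τ r (d·x̂)}`, and the two boundary
directions `x̂` lie in `K̄ ∩ S¹`, so `d·x̂ > ζ`. Hence each boundary integral of `|e^{ρ·x}|^t` is at most
`∫₀^∞ e^{-τ t ζ r} dr = 1/(τ t ζ)`, which already gives the bound with `C = (2/(tζ))^{1/t}`.
-/

theorem setIntegral_Ioo_exp_neg_mul_le {c : ℝ} (hc : 0 < c) (h : ℝ) :
    ∫ r in Ioo 0 h, Real.exp (-c * r) ≤ c⁻¹ :=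
  calc ∫ r in Ioo 0 h, Real.exp (-c * r)
      ≤ ∫ r in Ioi 0, Real.exp (-c * r) :=
        setIntegral_mono_set (exp_neg_integrableOn_Ioi 0 hc)
          (Filter.Eventually.of_forall fun _ => (Real.exp_pos _).le) Ioo_subset_Ioi_self.eventuallyLE
    _ = c⁻¹ := by
        rw [integral_exp_mul_Ioi (neg_neg_of_pos hc)]
        simp

theorem norm_cexp_neg_mul_mul_add_mul_I (τ r a b : ℝ) :
    ‖Complex.exp (-(τ : ℂ) * r * (a + b * Complex.I))‖ = Real.exp (-τ * r * a) := by
  rw [Complex.norm_exp]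
  simp [Complex.mul_re]

theorem setIntegral_Ioo_norm_cexp_rpow_le {τ a t : ℝ} (hτ : 0 < τ) (ha : 0 < a) (ht : 0 < t)
    (b h : ℝ) :
    ∫ r in Ioo 0 h, ‖Complex.exp (-(τ : ℂ) * r * (a + b * Complex.I))‖ ^ t ≤ (τ * a * t)⁻¹ := by
  have hphase : ∀ r : ℝ,
      ‖Complex.exp (-(τ : ℂ) * r * (a + b * Complex.I))‖ ^ t = Real.exp (-(τ * a * t) * r) := by
    intro r
    rw [norm_cexp_neg_mul_mul_add_mul_I, ← Real.exp_mul]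
    ring_nf
  simp_rw [hphase]
  exact setIntegral_Ioo_exp_neg_mul_le (by positivity) h

theorem norm_eq_one_of_ofLp_eq_cos_sin {x : EuclideanSpace ℝ (Fin 2)} {θ : ℝ}
    (hx : x.ofLp = ![Real.cos θ, Real.sin θ]) : ‖x‖ = 1 := by
  rw [EuclideanSpace.norm_eq, hx, Fin.sum_univ_two]
  simp

theorem mem_closure_sector_of_ofLp_eq_cos_sin {θm θM θ : ℝ} (hm : -Real.pi < θm) (hmM : θm < θM)
    (hM : θM ≤ Real.pi) (hθ : θ ∈ Icc θm θM) {x : EuclideanSpace ℝ (Fin 2)}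
    (hx : x.ofLp = ![Real.cos θ, Real.sin θ]) :
    x ∈ closure {x : EuclideanSpace ℝ (Fin 2) |
      θm < Complex.arg ((x 0 : ℂ) + (x 1 : ℂ) * Complex.I) ∧
        Complex.arg ((x 0 : ℂ) + (x 1 : ℂ) * Complex.I) < θM} := by
  set unitVec : ℝ → EuclideanSpace ℝ (Fin 2) := fun ψ => WithLp.toLp 2 ![Real.cos ψ, Real.sin ψ]
  have hcont : Continuous unitVec :=
    (PiLp.continuous_toLp 2 _).comp (continuous_pi fun i => by
      fin_cases i
      exacts [Real.continuous_cos, Real.continuous_sin])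
  have hxθ : x = unitVec θ := WithLp.ofLp_injective 2 hx
  rw [← closure_Ioo hmM.ne] at hθ
  refine hxθ ▸ map_mem_closure hcont hθ fun ψ hψ => ?_
  have harg : Complex.arg (Real.cos ψ + Real.sin ψ * Complex.I) = ψ := by
    push_cast
    exact Complex.arg_cos_add_sin_mul_I ⟨hm.trans hψ.1, hψ.2.le.trans hM⟩
  exact ⟨harg.symm ▸ hψ.1, harg.symm ▸ hψ.2⟩

theorem Lt_estimate_sector_boundary_general (θm θM : ℝ) (hm : -Real.pi < θm) (hmM : θm < θM)
    (hM : θM < Real.pi)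
    (K : Set (EuclideanSpace ℝ (Fin 2)))
    (hK : K = {x | θm < Complex.arg ((x 0 : ℂ) + (x 1 : ℂ) * Complex.I) ∧
                   Complex.arg ((x 0 : ℂ) + (x 1 : ℂ) * Complex.I) < θM})
    (d dp : EuclideanSpace ℝ (Fin 2)) (ζ : ℝ) (hζ : 0 < ζ)
    (hsep : ∀ x ∈ closure K, ‖x‖ = 1 → ζ < ⟪d, x⟫)
    (xm xM : EuclideanSpace ℝ (Fin 2))
    (hxm : xm = ![Real.cos θm, Real.sin θm]) (hxM : xM = ![Real.cos θM, Real.sin θM])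
    (h : ℝ) (t : ℝ) (ht : 0 < t) :
    ∃ C > 0, ∃ T : ℝ, ∀ τ : ℝ, T ≤ τ →
      ((∫ r in Set.Ioo (0 : ℝ) h,
          ‖Complex.exp (-(τ : ℂ) * (r : ℂ) * ((⟪d, xm⟫ : ℂ) + (⟪dp, xm⟫ : ℂ) * Complex.I))‖ ^ t) +
        ∫ r in Set.Ioo (0 : ℝ) h,
          ‖Complex.exp (-(τ : ℂ) * (r : ℂ) * ((⟪d, xM⟫ : ℂ) + (⟪dp, xM⟫ : ℂ) * Complex.I))‖ ^ t) ^ (1 / t)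
        ≤ C * (1 / τ + (1 / τ) * Real.exp (-(t / 2) * ζ * h * τ)) ^ (1 / t) := by
  subst hK
  have hsep_m : ζ < ⟪d, xm⟫ := hsep xm (mem_closure_sector_of_ofLp_eq_cos_sin hm hmM hM.le
    (left_mem_Icc.2 hmM.le) hxm) (norm_eq_one_of_ofLp_eq_cos_sin hxm)
  have hsep_M : ζ < ⟪d, xM⟫ := hsep xM (mem_closure_sector_of_ofLp_eq_cos_sin hm hmM hM.le
    (right_mem_Icc.2 hmM.le) hxM) (norm_eq_one_of_ofLp_eq_cos_sin hxM)
  refine ⟨(2 / (t * ζ)) ^ (1 / t), by positivity, 1, fun τ hτ => ?_⟩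
  have hτ0 : 0 < τ := one_pos.trans_le hτ
  have hray : ∀ a b : ℝ, ζ < a →
      ∫ r in Ioo 0 h, ‖Complex.exp (-(τ : ℂ) * r * (a + b * Complex.I))‖ ^ t ≤ (τ * ζ * t)⁻¹ :=
    fun a b ha => (setIntegral_Ioo_norm_cexp_rpow_le hτ0 (hζ.trans ha) ht b h).trans
      (by gcongr)
  have hsum := add_le_add (hray _ ⟪dp, xm⟫ hsep_m) (hray _ ⟪dp, xM⟫ hsep_M)
  calc _ ≤ (2 / (t * ζ) * (1 / τ)) ^ (1 / t) := by
        gcongr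
        refine hsum.trans_eq ?_
        field_simp
        ring
    _ ≤ (2 / (t * ζ) * (1 / τ + 1 / τ * Real.exp (-(t / 2) * ζ * h * τ))) ^ (1 / t) := by
        gcongr
        exact le_add_of_nonneg_right (by positivity)
    _ = _ := Real.mul_rpow (by positivity) (by positivity)

/-- `L^t` estimate of the CGO phase `e^{ρ·x}`, `ρ = -τ(d + i d⊥)`, on the truncated
boundary rays `Γ_h^±` (of length `h`, at angles `θ_m`, `θ_M`) of a planar sector,
parametrized by arclength: for every `t > 0` there is `C = C(t, ζ)` with
`‖e^{ρ·x}‖_{L^t(Γ_h^±)} ≤ C (τ^{-1} + τ^{-1} e^{-(t/2)ζhτ})^{1/t}` for large `τ`. -/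
theorem Lt_estimate_sector_boundary (θm θM : ℝ) (hm : -Real.pi < θm) (hmM : θm < θM)
    (hM : θM < Real.pi)
    (K : Set (EuclideanSpace ℝ (Fin 2)))
    (hK : K = {x | θm < Complex.arg ((x 0 : ℂ) + (x 1 : ℂ) * Complex.I) ∧
                   Complex.arg ((x 0 : ℂ) + (x 1 : ℂ) * Complex.I) < θM})
    (d dp : EuclideanSpace ℝ (Fin 2)) (hd : ‖d‖ = 1) (hdp : ‖dp‖ = 1)
    (horth : ⟪d, dp⟫ = 0) (ζ : ℝ) (hζ : 0 < ζ)
    (hsep : ∀ x ∈ closure K, ‖x‖ = 1 → ζ < ⟪d, x⟫)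
    (xm xM : EuclideanSpace ℝ (Fin 2))
    (hxm : xm = ![Real.cos θm, Real.sin θm]) (hxM : xM = ![Real.cos θM, Real.sin θM])
    (h : ℝ) (hh : 0 < h) (t : ℝ) (ht : 0 < t) :
    ∃ C > 0, ∃ T : ℝ, ∀ τ : ℝ, T ≤ τ →
      ((∫ r in Set.Ioo (0 : ℝ) h,
          ‖Complex.exp (-(τ : ℂ) * (r : ℂ) * ((⟪d, xm⟫ : ℂ) + (⟪dp, xm⟫ : ℂ) * Complex.I))‖ ^ t) +
        ∫ r in Set.Ioo (0 : ℝ) h,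
          ‖Complex.exp (-(τ : ℂ) * (r : ℂ) * ((⟪d, xM⟫ : ℂ) + (⟪dp, xM⟫ : ℂ) * Complex.I))‖ ^ t) ^ (1 / t)
        ≤ C * (1 / τ + (1 / τ) * Real.exp (-(t / 2) * ζ * h * τ)) ^ (1 / t) :=
  Lt_estimate_sector_boundary_general θm θM hm hmM hM K hK d dp ζ hζ hsep xm xM hxm hxM h t ht
end

section
/- Let K be an open planar sector with boundary rays Γ^± and aperture 0 < θ_M - θ_m < π, and suppose the unit vectors d ⊥ d⊥ satisfy d · x̂ > ζ > 0 for all x̂ ∈ K̄ ∩ S¹. With ρ = -τ(d + i d⊥), the modulus of the boundary integral satisfies |∫_{Γ_h^±} e^{ρ·x} dσ| ≥ C_S / τ - (C'/τ) e^{-(1/2) ζ h τ} for all sufficiently large τ, where C_S > 0 depends only on the opening angle and ζ. -/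
open MeasureTheory Set
open scoped RealInnerProductSpace

/-!
On the ray in direction `x̂` the integrand is `exp (-τ r z)` with `z = ⟪d, x̂⟫ + ⟪dp, x̂⟫ i`, so the
integral equals `(τ z)⁻¹ - exp (-τ z h) / (τ z)`. Since `ζ < Re z` and `|z|² ≤ 2`, the real part of
`(τ z)⁻¹ = τ⁻¹ Re z / |z|²` is at least `ζ / (2τ)`, while the remainder has modulus at most
`exp (-ζ h τ) / (ζ τ)`. Bounding the modulus of the sum by its real part gives the claim with
`C = ζ` and `C' = 2 / ζ`.
-/

open Complex

theorem integral_Ioo_exp_mul {a : ℂ} (ha : a ≠ 0) {h : ℝ} (hh : 0 ≤ h) :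
    ∫ r in Ioo 0 h, exp (a * r) = (exp (a * h) - 1) / a := by
  rw [← integral_Ioc_eq_integral_Ioo, ← intervalIntegral.integral_of_le hh,
    integral_exp_mul_complex ha, ofReal_zero, mul_zero, Complex.exp_zero]

theorem div_le_re_inv {z : ℂ} {ζ M : ℝ} (hζ : 0 ≤ ζ) (hre : ζ < z.re) (hz : normSq z ≤ M) :
    ζ / M ≤ (z⁻¹).re := by
  have hpos : 0 < normSq z := normSq_pos.mpr fun h0 => by simp [h0] at hre; linarith
  rw [inv_re]
  calc ζ / M ≤ ζ / normSq z := div_le_div_of_nonneg_left hζ hpos hz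
    _ ≤ z.re / normSq z := by gcongr

theorem norm_exp_neg_mul_div_le {a : ℂ} (ha : 0 < a.re) (h : ℝ) :
    ‖exp (-a * h) / a‖ ≤ Real.exp (-a.re * h) / a.re := by
  rw [norm_div, norm_exp]
  gcongr
  · simp
  · exact re_le_norm a

theorem div_sub_le_re_integral_Ioo_exp {z : ℂ} {ζ M τ h : ℝ} (hζ : 0 < ζ) (hre : ζ < z.re)
    (hz : normSq z ≤ M) (hτ : 0 < τ) (hh : 0 ≤ h) :
    ζ / M / τ - 1 / ζ / τ * Real.exp (-ζ * h * τ) ≤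
      (∫ r in Ioo 0 h, exp (-(τ : ℂ) * r * z)).re := by
  have hτz : (τ : ℂ) * z ≠ 0 := mul_ne_zero (ofReal_ne_zero.mpr hτ.ne') fun h0 => by
    simp [h0] at hre; linarith
  have hre' : ((τ : ℂ) * z).re = τ * z.re := by simp
  have hclosed : ∫ r in Ioo 0 h, exp (-(τ : ℂ) * r * z) =
      (τ : ℂ)⁻¹ * z⁻¹ - exp (-((τ : ℂ) * z) * h) / ((τ : ℂ) * z) := by
    simp_rw [mul_right_comm _ _ z]
    rw [integral_Ioo_exp_mul (by simpa using hτz) hh]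
    field_simp
    ring
  have hmain : ζ / M / τ ≤ ((τ : ℂ)⁻¹ * z⁻¹).re := by
    rw [← ofReal_inv, re_ofReal_mul, div_eq_inv_mul (ζ / M)]
    gcongr
    exact div_le_re_inv hζ.le hre hz
  have hrem : ‖exp (-((τ : ℂ) * z) * h) / ((τ : ℂ) * z)‖ ≤ 1 / ζ / τ * Real.exp (-ζ * h * τ) := by
    refine (norm_exp_neg_mul_div_le (by rw [hre']; exact mul_pos hτ (hζ.trans hre)) h).trans ?_
    rw [hre', div_div, one_div_mul_eq_div, mul_comm ζ τ]
    have hexp : -(τ * z.re) * h ≤ -ζ * h * τ := by nlinarith [mul_nonneg hτ.le hh]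
    gcongr
  calc ζ / M / τ - 1 / ζ / τ * Real.exp (-ζ * h * τ)
      ≤ ((τ : ℂ)⁻¹ * z⁻¹).re - ‖exp (-((τ : ℂ) * z) * h) / ((τ : ℂ) * z)‖ := sub_le_sub hmain hrem
    _ ≤ _ := by
      rw [hclosed, sub_re]
      exact sub_le_sub_left (re_le_norm _) _

theorem normSq_inner_add_inner_mul_I_le {E : Type*} [NormedAddCommGroup E]
    [InnerProductSpace ℝ E] (u v x : E) :
    normSq (⟪u, x⟫ + ⟪v, x⟫ * I) ≤ (‖u‖ ^ 2 + ‖v‖ ^ 2) * ‖x‖ ^ 2 := by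
  have hu := sq_le_sq' (neg_le_of_abs_le (abs_real_inner_le_norm u x)) (real_inner_le_norm u x)
  have hv := sq_le_sq' (neg_le_of_abs_le (abs_real_inner_le_norm v x)) (real_inner_le_norm v x)
  rw [normSq_add_mul_I]
  linarith [mul_pow ‖u‖ ‖x‖ 2, mul_pow ‖v‖ ‖x‖ 2]

theorem EuclideanSpace.norm_toLp_cos_sin (θ : ℝ) :
    ‖(WithLp.toLp 2 ![Real.cos θ, Real.sin θ] : EuclideanSpace ℝ (Fin 2))‖ = 1 := by
  simp [EuclideanSpace.norm_eq]

theorem toLp_cos_sin_mem_closure_sector {θm θM θ : ℝ} (hm : -Real.pi < θm) (hmM : θm < θM)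
    (hM : θM ≤ Real.pi) (hθ : θ ∈ Icc θm θM) :
    (WithLp.toLp 2 ![Real.cos θ, Real.sin θ] : EuclideanSpace ℝ (Fin 2)) ∈
      closure {x : EuclideanSpace ℝ (Fin 2) | θm < arg ((x 0 : ℂ) + (x 1 : ℂ) * I) ∧
        arg ((x 0 : ℂ) + (x 1 : ℂ) * I) < θM} := by
  let arc : ℝ → EuclideanSpace ℝ (Fin 2) := fun t ↦ WithLp.toLp 2 ![Real.cos t, Real.sin t]
  have harc : Continuous arc :=
    (PiLp.continuous_toLp 2 _).comp <| continuous_pi <| Fin.forall_fin_two.mpr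
      ⟨Real.continuous_cos, Real.continuous_sin⟩
  refine map_mem_closure (f := arc) harc (by rwa [closure_Ioo hmM.ne]) fun t ht ↦ ?_
  simpa [arc, arg_cos_add_sin_mul_I ⟨hm.trans ht.1, ht.2.le.trans hM⟩] using ht

theorem boundary_integral_lower_bound_sector_general (θm θM : ℝ) (hm : -Real.pi < θm)
    (hmM : θm < θM) (hM : θM < Real.pi)
    (K : Set (EuclideanSpace ℝ (Fin 2)))
    (hK : K = {x | θm < Complex.arg ((x 0 : ℂ) + (x 1 : ℂ) * Complex.I) ∧
                   Complex.arg ((x 0 : ℂ) + (x 1 : ℂ) * Complex.I) < θM})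
    (d dp : EuclideanSpace ℝ (Fin 2)) (hd : ‖d‖ = 1) (hdp : ‖dp‖ = 1)
    (ζ : ℝ) (hζ : 0 < ζ)
    (hsep : ∀ x ∈ closure K, ‖x‖ = 1 → ζ < ⟪d, x⟫)
    (xm xM : EuclideanSpace ℝ (Fin 2))
    (hxm : xm = ![Real.cos θm, Real.sin θm]) (hxM : xM = ![Real.cos θM, Real.sin θM])
    (h : ℝ) (hh : 0 < h) :
    ∃ C > 0, ∃ C' : ℝ, ∃ T : ℝ, ∀ τ : ℝ, T ≤ τ →
      C / τ - C' / τ * Real.exp (-(1 / 2) * ζ * h * τ) ≤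
        ‖((∫ r in Set.Ioo (0 : ℝ) h,
              Complex.exp (-(τ : ℂ) * (r : ℂ) * ((⟪d, xm⟫ : ℂ) + (⟪dp, xm⟫ : ℂ) * Complex.I))) +
            ∫ r in Set.Ioo (0 : ℝ) h,
              Complex.exp (-(τ : ℂ) * (r : ℂ) * ((⟪d, xM⟫ : ℂ) + (⟪dp, xM⟫ : ℂ) * Complex.I)))‖ := by
  have hray : ∀ θ ∈ Icc θm θM, ∀ x : EuclideanSpace ℝ (Fin 2), x.ofLp = ![Real.cos θ, Real.sin θ] →
      ∀ τ > 0, ζ / 2 / τ - 1 / ζ / τ * Real.exp (-ζ * h * τ) ≤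
        (∫ r in Ioo (0 : ℝ) h, exp (-(τ : ℂ) * r * (⟪d, x⟫ + ⟪dp, x⟫ * I))).re := by
    rintro θ hθ x hx τ hτ
    obtain rfl : x = WithLp.toLp 2 ![Real.cos θ, Real.sin θ] := by rw [← hx]
    have hnorm := EuclideanSpace.norm_toLp_cos_sin θ
    have hmem := toLp_cos_sin_mem_closure_sector hm hmM hM.le hθ
    refine div_sub_le_re_integral_Ioo_exp hζ (by simpa using hsep _ (hK ▸ hmem) hnorm) ?_ hτ hh.le
    refine (normSq_inner_add_inner_mul_I_le d dp _).trans_eq ?_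
    rw [hd, hdp, hnorm]
    norm_num
  refine ⟨ζ, hζ, 2 / ζ, 1, fun τ hτ ↦ ?_⟩
  have hτ0 : 0 < τ := one_pos.trans_le hτ
  have hdecay : Real.exp (-ζ * h * τ) ≤ Real.exp (-(1 / 2) * ζ * h * τ) := by
    gcongr
    nlinarith [mul_pos (mul_pos hζ hh) hτ0]
  calc ζ / τ - 2 / ζ / τ * Real.exp (-(1 / 2) * ζ * h * τ)
      ≤ ζ / τ - 2 / ζ / τ * Real.exp (-ζ * h * τ) := by gcongr
    _ = 2 * (ζ / 2 / τ - 1 / ζ / τ * Real.exp (-ζ * h * τ)) := by ring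
    _ ≤ (_ + _ : ℂ).re := by
        rw [add_re, two_mul]
        exact add_le_add (hray θm ⟨le_rfl, hmM.le⟩ xm hxm τ hτ0)
          (hray θM ⟨hmM.le, le_rfl⟩ xM hxM τ hτ0)
    _ ≤ _ := re_le_norm _

/-- Lower bound for the boundary integral of the CGO phase over the two truncated
rays of a convex planar sector (aperture `< π`), parametrized by arclength:
`|∫_{Γ_h^±} e^{ρ·x} dσ| ≥ C_S/τ - (C'/τ) e^{-(1/2)ζhτ}` for sufficiently large `τ`,
with `C_S > 0` depending only on the opening angle and `ζ`. -/
theorem boundary_integral_lower_bound_sector (θm θM : ℝ) (hm : -Real.pi < θm)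
    (hmM : θm < θM) (hM : θM < Real.pi) (haper : θM - θm < Real.pi)
    (K : Set (EuclideanSpace ℝ (Fin 2)))
    (hK : K = {x | θm < Complex.arg ((x 0 : ℂ) + (x 1 : ℂ) * Complex.I) ∧
                   Complex.arg ((x 0 : ℂ) + (x 1 : ℂ) * Complex.I) < θM})
    (d dp : EuclideanSpace ℝ (Fin 2)) (hd : ‖d‖ = 1) (hdp : ‖dp‖ = 1)
    (horth : ⟪d, dp⟫ = 0) (ζ : ℝ) (hζ : 0 < ζ)
    (hsep : ∀ x ∈ closure K, ‖x‖ = 1 → ζ < ⟪d, x⟫)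
    (xm xM : EuclideanSpace ℝ (Fin 2))
    (hxm : xm = ![Real.cos θm, Real.sin θm]) (hxM : xM = ![Real.cos θM, Real.sin θM])
    (h : ℝ) (hh : 0 < h) :
    ∃ C > 0, ∃ C' : ℝ, ∃ T : ℝ, ∀ τ : ℝ, T ≤ τ →
      C / τ - C' / τ * Real.exp (-(1 / 2) * ζ * h * τ) ≤
        ‖((∫ r in Set.Ioo (0 : ℝ) h,
              Complex.exp (-(τ : ℂ) * (r : ℂ) * ((⟪d, xm⟫ : ℂ) + (⟪dp, xm⟫ : ℂ) * Complex.I))) +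
            ∫ r in Set.Ioo (0 : ℝ) h,
              Complex.exp (-(τ : ℂ) * (r : ℂ) * ((⟪d, xM⟫ : ℂ) + (⟪dp, xM⟫ : ℂ) * Complex.I)))‖ :=
  boundary_integral_lower_bound_sector_general θm θM hm hmM hM K hK d dp hd hdp ζ hζ hsep xm xM hxm
    hxM h hh
end

section
/- Let z₁ = ρ₁ · x̂₁(θ), z₂ = ρ₁ · x̂₂(θ), z₃ = ρ₁ · x̂₃(θ), where ρ₁ = d + i d⊥ with d = (1,1,1)ᵀ, d⊥ = (1,-1,0)ᵀ, and x̂₁(θ) = (0, sin θ, cos θ)ᵀ, x̂₂(θ) = (sin θ, 0, cos θ)ᵀ, x̂₃(θ) = (cos θ, sin θ, 0)ᵀ for a fixed θ ∈ (0, π/2). Then |1/z₁² + 1/z₂² + 1/z₃²| ≥ sin³θ / 30 > 0. -/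
/-!
With `s = sin θ`, `c = cos θ` one computes `z₁ = (s + c) - s i`, `z₂ = z̄₁` and
`z₃ = (s + c) + (c - s) i`. Hence `1/z₁² + 1/z₂² = 2 Re (1/z₁²)` is a nonnegative real, since
`Re z₁² = c (c + 2s) ≥ 0`, while `1/z₃²` has real part `s c ≥ 0` and modulus `1/|z₃|² = 1/2`.
Adding a nonnegative real to a number with nonnegative real part cannot decrease its modulus,
so the sum has modulus at least `1/2 ≥ sin³θ / 30`.
-/

open ComplexConjugate

namespace Complex

lemma re_sq_nonneg_of_abs_im_le {z : ℂ} (h : |z.im| ≤ z.re) : 0 ≤ (z ^ 2).re := by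
  rw [sq, mul_re]
  nlinarith [abs_mul_abs_self z.im, abs_nonneg z.im]

lemma re_one_div_nonneg {z : ℂ} (h : 0 ≤ z.re) : 0 ≤ (1 / z).re := by
  rw [one_div, inv_re]
  exact div_nonneg h (normSq_nonneg z)

lemma norm_le_norm_ofReal_add {w : ℂ} {r : ℝ} (hr : 0 ≤ r) (hw : 0 ≤ w.re) :
    ‖w‖ ≤ ‖(r : ℂ) + w‖ := by
  rw [← sq_le_sq₀ (norm_nonneg _) (norm_nonneg _), Complex.sq_norm, Complex.sq_norm,
    normSq_apply, normSq_apply]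
  simp only [add_re, add_im, ofReal_re, ofReal_im, zero_add]
  nlinarith

lemma one_div_sq_add_one_div_conj_sq (z : ℂ) :
    1 / z ^ 2 + 1 / conj z ^ 2 = ((2 * (1 / z ^ 2).re : ℝ) : ℂ) := by
  rw [← add_conj, map_div₀, map_one, map_pow]

lemma inv_norm_sq_le_norm_one_div_sq_add {z w : ℂ} (hz : 0 ≤ (z ^ 2).re) (hw : 0 ≤ (w ^ 2).re) :
    (‖w‖ ^ 2)⁻¹ ≤ ‖1 / z ^ 2 + 1 / conj z ^ 2 + 1 / w ^ 2‖ := by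
  rw [one_div_sq_add_one_div_conj_sq]
  calc (‖w‖ ^ 2)⁻¹ = ‖1 / w ^ 2‖ := by rw [norm_div, norm_one, norm_pow, one_div]
    _ ≤ _ := norm_le_norm_ofReal_add (by linarith [re_one_div_nonneg hz]) (re_one_div_nonneg hw)

end Complex

/-- With `ρ₁ = d + i d⊥`, `d = (1,1,1)ᵀ`, `d⊥ = (1,-1,0)ᵀ`, and
`x̂₁(θ) = (0, sin θ, cos θ)ᵀ`, `x̂₂(θ) = (sin θ, 0, cos θ)ᵀ`, `x̂₃(θ) = (cos θ, sin θ, 0)ᵀ`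
for fixed `θ ∈ (0, π/2)`, setting `z_j = ρ₁ · x̂_j(θ)` (bilinear dot product), one has
`|1/z₁² + 1/z₂² + 1/z₃²| ≥ sin³θ / 30 > 0`. -/
theorem cuboid_corner_phase_lower_bound (θ : ℝ) (hθ : 0 < θ) (hθ' : θ < Real.pi / 2)
    (ρ₁ : Fin 3 → ℂ)
    (hρ : ρ₁ = fun i => (![1, 1, 1] i : ℂ) + Complex.I * (![1, -1, 0] i : ℂ))
    (z₁ z₂ z₃ : ℂ)
    (hz₁ : z₁ = ∑ i : Fin 3, ρ₁ i * (![(0 : ℂ), (Real.sin θ : ℂ), (Real.cos θ : ℂ)] i))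
    (hz₂ : z₂ = ∑ i : Fin 3, ρ₁ i * (![(Real.sin θ : ℂ), (0 : ℂ), (Real.cos θ : ℂ)] i))
    (hz₃ : z₃ = ∑ i : Fin 3, ρ₁ i * (![(Real.cos θ : ℂ), (Real.sin θ : ℂ), (0 : ℂ)] i)) :
    0 < Real.sin θ ^ 3 / 30 ∧
      Real.sin θ ^ 3 / 30 ≤ ‖1 / z₁ ^ 2 + 1 / z₂ ^ 2 + 1 / z₃ ^ 2‖ := by
  have hs : 0 < Real.sin θ := Real.sin_pos_of_pos_of_lt_pi hθ (by linarith [Real.pi_pos])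
  have hc : 0 < Real.cos θ := Real.cos_pos_of_mem_Ioo ⟨by linarith [Real.pi_pos], hθ'⟩
  have hs1 : Real.sin θ ≤ 1 := Real.sin_le_one θ
  have hpyth := Real.sin_sq_add_cos_sq θ
  generalize Real.sin θ = s at *
  generalize Real.cos θ = c at *
  subst hρ
  have hz₁' : z₁ = ⟨s + c, -s⟩ := by
    subst hz₁; apply Complex.ext <;> simp [Fin.sum_univ_three]
  have hz₂' : z₂ = conj z₁ := by
    subst hz₁ hz₂; apply Complex.ext <;> simp [Fin.sum_univ_three]
  have hz₃' : z₃ = ⟨s + c, c - s⟩ := by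
    subst hz₃; apply Complex.ext <;> simp [Fin.sum_univ_three] <;> ring
  have hz₃_norm : ‖z₃‖ ^ 2 = 2 := by
    rw [Complex.sq_norm, hz₃', Complex.normSq_mk]; linear_combination 2 * hpyth
  refine ⟨by positivity, ?_⟩
  calc s ^ 3 / 30 ≤ (‖z₃‖ ^ 2)⁻¹ := by
        rw [hz₃_norm]; nlinarith [pow_le_one₀ hs.le hs1 (n := 3)]
    _ ≤ _ := by
      rw [hz₂']
      apply Complex.inv_norm_sq_le_norm_one_div_sq_add <;>
        apply Complex.re_sq_nonneg_of_abs_im_le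
      · rw [hz₁']; exact abs_le.mpr ⟨by linarith, by linarith⟩
      · rw [hz₃']; exact abs_le.mpr ⟨by linarith, by linarith⟩
end

section
/- Let K be an open planar sector with -π < θ_m < θ_M < π and opening angle 0 < θ_M - θ_m < π, let d ⊥ d⊥ be unit vectors with d · x̂ > ζ > 0 for all x̂ ∈ K̄ ∩ S¹, and set ρ = -τ(d + i d⊥). Then for S_h = K ∩ B_h, the modulus of the area integral satisfies |∫_{S_h} e^{ρ·x} dx| ≥ C̃_S / τ² - (C'/τ) e^{-(1/2) ζ h τ} for all sufficiently large τ, where C̃_S > 0 depends only on the opening angle and ζ. -/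
/-!
Identify `ℝ²` with `ℂ`. Then `d·x + i dp·x` is `conj δ · z` or its conjugate (`δ` the image of `d`,
depending on the orientation of `(d, dp)`), and conjugation does not change the modulus of the
integral. In polar coordinates `z = r e^{iθ}` the phase is `τ r w(θ)` with `|w(θ)| = 1` and
`Re w(θ) = d·x̂(θ) ≥ ζ`. The radial integral over `(0, h)` is `(τ w)⁻² - ∫_h^∞ r e^{-τ w r} dr`,
and the tail is `O(τ⁻¹ e^{-ζhτ})`. The main term integrates exactly: `w(θ)⁻² = δ² e^{-2iθ}`, so
its modulus is `|sin(θM - θm)| / τ²`, which is positive because the aperture lies in `(0, π)`.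
-/

open MeasureTheory Set
open scoped RealInnerProductSpace Real ComplexConjugate
open Complex (I exp arg)

def truncatedSector (θm θM h : ℝ) : Set ℂ := arg ⁻¹' Ioo θm θM ∩ Metric.ball 0 h

theorem measurableSet_truncatedSector (θm θM h : ℝ) :
    MeasurableSet (truncatedSector θm θM h) :=
  (Complex.measurable_arg measurableSet_Ioo).inter measurableSet_ball

theorem polarCoord_symm_eq_mul_exp (p : ℝ × ℝ) :
    Complex.polarCoord.symm p = p.1 * exp (p.2 * I) := by
  simp [Complex.exp_mul_I]

theorem polarCoord_target_inter_preimage_truncatedSector {θm θM h : ℝ} (hm : -π ≤ θm)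
    (hM : θM ≤ π) :
    polarCoord.target ∩ Complex.polarCoord.symm ⁻¹' truncatedSector θm θM h =
      Ioo 0 h ×ˢ Ioo θm θM := by
  ext ⟨r, θ⟩
  constructor
  · rintro ⟨hp, hS⟩
    have hinv := Complex.polarCoord.right_inv hp
    rw [Complex.polarCoord_apply, Prod.mk.injEq] at hinv
    simp only [truncatedSector, mem_preimage, mem_inter_iff, Metric.mem_ball, dist_zero_right,
      hinv.1, hinv.2] at hS
    exact ⟨⟨hp.1, hS.2⟩, hS.1⟩
  · rintro ⟨⟨hr, hrh⟩, hθm, hθM⟩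
    have hp : (r, θ) ∈ polarCoord.target := ⟨hr, by linarith, by linarith⟩
    have hinv := Complex.polarCoord.right_inv hp
    rw [Complex.polarCoord_apply, Prod.mk.injEq] at hinv
    refine ⟨hp, ?_⟩
    simp only [truncatedSector, mem_preimage, mem_inter_iff, Metric.mem_ball, dist_zero_right,
      hinv.1, hinv.2]
    exact ⟨⟨hθm, hθM⟩, hrh⟩

theorem setIntegral_truncatedSector_eq_integral_polar {E : Type*} [NormedAddCommGroup E]
    [NormedSpace ℝ E] {f : ℂ → E} (hf : Continuous f) {θm θM h : ℝ} (hm : -π ≤ θm)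
    (hmM : θm ≤ θM) (hM : θM ≤ π) (hh : 0 ≤ h) :
    ∫ z in truncatedSector θm θM h, f z =
      ∫ θ in θm..θM, ∫ r in 0..h, r • f (r * exp (θ * I)) := by
  set F : ℝ × ℝ → E := fun p ↦ p.1 • f (Complex.polarCoord.symm p)
  have hsymm : Continuous Complex.polarCoord.symm := by
    rw [show (Complex.polarCoord.symm : ℝ × ℝ → ℂ) = fun p ↦ p.1 * exp (p.2 * I) from
      funext polarCoord_symm_eq_mul_exp]
    fun_prop
  have hind : ∀ p : ℝ × ℝ,
      p.1 • (truncatedSector θm θM h).indicator f (Complex.polarCoord.symm p) =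
        (Complex.polarCoord.symm ⁻¹' truncatedSector θm θM h).indicator F p := fun p ↦ by
    by_cases hp : Complex.polarCoord.symm p ∈ truncatedSector θm θM h
    · rw [indicator_of_mem hp, indicator_of_mem (mem_preimage.2 hp)]
    · rw [indicator_of_notMem hp, smul_zero, indicator_of_notMem
        (show p ∉ Complex.polarCoord.symm ⁻¹' truncatedSector θm θM h from hp)]
  have hint : Integrable F ((volume.restrict (Ioo 0 h)).prod (volume.restrict (Ioo θm θM))) := by
    rw [Measure.prod_restrict, ← Measure.volume_eq_prod]
    exact ((by fun_prop : Continuous F).continuousOn.integrableOn_compact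
      (isCompact_Icc.prod isCompact_Icc)).mono_set
        (prod_mono Ioo_subset_Icc_self Ioo_subset_Icc_self)
  rw [← integral_indicator (measurableSet_truncatedSector θm θM h),
    ← Complex.integral_comp_polarCoord_symm]
  simp_rw [hind]
  rw [setIntegral_indicator ((measurableSet_truncatedSector θm θM h).preimage hsymm.measurable),
    polarCoord_target_inter_preimage_truncatedSector hm hM, Measure.volume_eq_prod,
    ← Measure.prod_restrict, integral_prod_symm _ hint, intervalIntegral.integral_of_le hmM,
    integral_Ioc_eq_integral_Ioo]
  refine setIntegral_congr_fun measurableSet_Ioo fun θ _ ↦ ?_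
  rw [intervalIntegral.integral_of_le hh, integral_Ioc_eq_integral_Ioo]
  simp only [F, polarCoord_symm_eq_mul_exp]

/-- `∫_h^∞ r e^{-cr} dr` when `0 < c.re`. -/
noncomputable def radialTail (c : ℂ) (h : ℝ) : ℂ := (c * h + 1) / c ^ 2 * exp (-(c * h))

theorem integral_mul_exp_neg_mul {c : ℂ} (hc : c ≠ 0) (h : ℝ) :
    ∫ r in (0 : ℝ)..h, (r : ℂ) * exp (-(c * r)) = 1 / c ^ 2 - radialTail c h := by
  have hderiv : ∀ r : ℝ, HasDerivAt (fun s : ℝ ↦ -radialTail c s) (r * exp (-(c * r))) r := by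
    intro r
    have hlin : HasDerivAt (fun s : ℝ ↦ c * (s : ℂ)) c r := by
      simpa using (hasDerivAt_id (r : ℂ)).comp_ofReal.const_mul c
    refine (((hlin.add_const 1).div_const (c ^ 2)).mul hlin.neg.cexp).neg.congr_deriv ?_
    simp only [Pi.neg_apply]
    field_simp
    ring
  have hcont : Continuous fun r : ℝ ↦ (r : ℂ) * exp (-(c * r)) := by fun_prop
  rw [intervalIntegral.integral_eq_sub_of_hasDerivAt (fun r _ ↦ hderiv r)
    (hcont.intervalIntegrable 0 h)]
  simp [radialTail]
  ring

theorem norm_radialTail_le (c : ℂ) {h : ℝ} (hh : 0 ≤ h) :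
    ‖radialTail c h‖ ≤ (‖c‖ * h + 1) / ‖c‖ ^ 2 * Real.exp (-(c.re * h)) := by
  have hlin : ‖c * h + 1‖ ≤ ‖c‖ * h + 1 := by
    simpa [abs_of_nonneg hh] using norm_add_le (c * h) 1
  have hre : (-(c * h)).re = -(c.re * h) := by simp
  rw [radialTail, norm_mul, norm_div, norm_pow, Complex.norm_exp, hre]
  gcongr

theorem norm_integral_one_div_mul_exp_mul_I_sq (c : ℂ) (a b : ℝ) :
    ‖∫ θ in a..b, 1 / (c * exp (θ * I)) ^ 2‖ = |Real.sin (b - a)| / ‖c‖ ^ 2 := by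
  have hexp : ∀ θ : ℝ, 1 / (c * exp (θ * I)) ^ 2 = 1 / c ^ 2 * exp (-2 * I * θ) := fun θ ↦ by
    rw [mul_pow, ← Complex.exp_nat_mul, one_div, mul_inv, ← Complex.exp_neg, one_div]
    push_cast
    ring_nf
  have hdiff : exp (-2 * I * b) - exp (-2 * I * a) =
      exp (-2 * I * a) * (exp (I * ((-2 * (b - a) : ℝ) : ℂ)) - 1) := by
    rw [mul_sub, ← Complex.exp_add]
    push_cast
    ring_nf
  simp_rw [hexp, intervalIntegral.integral_const_mul,
    integral_exp_mul_complex (by simp : -2 * I ≠ 0)]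
  rw [hdiff, norm_mul, norm_div, norm_div, norm_mul, Complex.norm_exp_I_mul_ofReal_sub_one,
    show -2 * (b - a) / 2 = -(b - a) by ring, Real.sin_neg]
  simp [Complex.norm_exp]
  ring

theorem le_norm_setIntegral_truncatedSector_exp {θm θM h ζ τ : ℝ} {u : ℂ} (hm : -π ≤ θm)
    (hmM : θm ≤ θM) (hM : θM ≤ π) (hh : 0 ≤ h) (hτ : 0 < τ) (hu : ‖u‖ = 1)
    (hζ : ∀ θ ∈ Icc θm θM, ζ ≤ (u * exp (θ * I)).re) :
    |Real.sin (θM - θm)| / τ ^ 2 - (θM - θm) * ((τ * h + 1) / τ ^ 2 * Real.exp (-(τ * ζ * h))) ≤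
      ‖∫ z in truncatedSector θm θM h, exp (-τ * (u * z))‖ := by
  have hnorm : ∀ θ : ℝ, ‖τ * u * exp (θ * I)‖ = τ := fun θ ↦ by
    rw [norm_mul, norm_mul, hu, Complex.norm_exp_ofReal_mul_I, Complex.norm_real,
      Real.norm_of_nonneg hτ.le, mul_one, mul_one]
  have hne : ∀ θ : ℝ, τ * u * exp (θ * I) ≠ 0 := fun θ h0 ↦ by
    simpa [h0, hτ.ne] using hnorm θ
  have hsplit : ∫ z in truncatedSector θm θM h, exp (-τ * (u * z)) =
      (∫ θ in θm..θM, 1 / (τ * u * exp (θ * I)) ^ 2) -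
        ∫ θ in θm..θM, radialTail (τ * u * exp (θ * I)) h := by
    rw [setIntegral_truncatedSector_eq_integral_polar (by fun_prop) hm hmM hM hh,
      ← intervalIntegral.integral_sub]
    · refine intervalIntegral.integral_congr fun θ _ ↦ ?_
      rw [← integral_mul_exp_neg_mul (hne θ)]
      refine intervalIntegral.integral_congr fun r _ ↦ ?_
      simp only [Complex.real_smul]
      ring_nf
    · exact (continuous_const.div (by fun_prop) fun θ ↦ pow_ne_zero 2 (hne θ)).intervalIntegrable
        _ _
    · refine Continuous.intervalIntegrable ?_ _ _
      unfold radialTail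
      fun_prop (disch := exact fun θ ↦ pow_ne_zero 2 (hne θ))
  have hmain : ‖∫ θ in θm..θM, 1 / (τ * u * exp (θ * I)) ^ 2‖ =
      |Real.sin (θM - θm)| / τ ^ 2 := by
    rw [norm_integral_one_div_mul_exp_mul_I_sq, norm_mul, hu, Complex.norm_real,
      Real.norm_of_nonneg hτ.le, mul_one]
  have htail : ‖∫ θ in θm..θM, radialTail (τ * u * exp (θ * I)) h‖ ≤
      (θM - θm) * ((τ * h + 1) / τ ^ 2 * Real.exp (-(τ * ζ * h))) := by
    refine (intervalIntegral.norm_integral_le_of_norm_le_const fun θ hθ ↦ ?_).trans_eq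
      (by rw [abs_of_nonneg (sub_nonneg.2 hmM), mul_comm])
    refine (norm_radialTail_le _ hh).trans ?_
    rw [hnorm, mul_assoc, Complex.re_ofReal_mul]
    rw [uIoc_of_le hmM] at hθ
    gcongr
    exact hζ θ (Ioc_subset_Icc_self hθ)
  rw [hsplit]
  linarith [norm_sub_norm_le (∫ θ in θm..θM, 1 / (τ * u * exp (θ * I)) ^ 2)
    (∫ θ in θm..θM, radialTail (τ * u * exp (θ * I)) h)]

theorem le_re_conj_mul_exp_mul_I_of_lt_inner {θm θM ζ : ℝ} {δ : ℂ} (hm : -π ≤ θm)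
    (hmM : θm < θM) (hM : θM ≤ π) (hsep : ∀ z ∈ arg ⁻¹' Ioo θm θM, ‖z‖ = 1 → ζ < ⟪δ, z⟫) :
    ∀ θ ∈ Icc θm θM, ζ ≤ (conj δ * exp (θ * I)).re := by
  have hopen : ∀ θ ∈ Ioo θm θM, ζ < (conj δ * exp (θ * I)).re := fun θ hθ ↦ by
    have harg : arg (exp (θ * I)) = θ := by
      rw [Complex.arg_exp_mul_I, (toIocMod_eq_self _).2 ⟨by linarith [hθ.1], by linarith [hθ.2]⟩]
    have := hsep _ (by rw [mem_preimage, harg]; exact hθ) (Complex.norm_exp_ofReal_mul_I θ)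
    rwa [Complex.inner, mul_comm] at this
  intro θ hθ
  rw [← closure_Ioo hmM.ne] at hθ
  exact closure_lt_subset_le continuous_const
    (by fun_prop : Continuous fun θ : ℝ ↦ (conj δ * exp (θ * I)).re) (closure_mono hopen hθ)

theorem inner_add_inner_mul_I_eq_or {δ δp : ℂ} (hδ : ‖δ‖ = 1) (hδp : ‖δp‖ = 1)
    (horth : ⟪δ, δp⟫ = 0) :
    (∀ z : ℂ, (⟪δ, z⟫ : ℂ) + ⟪δp, z⟫ * I = conj δ * z) ∨
      ∀ z : ℂ, (⟪δ, z⟫ : ℂ) + ⟪δp, z⟫ * I = conj (conj δ * z) := by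
  set q := δp * conj δ
  have hδp_eq : δp = q * δ := by
    rw [mul_assoc, Complex.conj_mul', hδ, Complex.ofReal_one, one_pow, mul_one]
  have hq_re : q.re = 0 := by rwa [Complex.inner] at horth
  have hq_im : q.im ^ 2 = 1 := by
    have hq : ‖q‖ ^ 2 = 1 := by rw [norm_mul, hδp, Complex.norm_conj, hδ]; norm_num
    rwa [Complex.sq_norm, Complex.normSq_apply, hq_re, ← sq, ← sq, zero_pow two_ne_zero,
      zero_add] at hq
  rcases sq_eq_one_iff.1 hq_im with hq | hq
  · exact Or.inl fun z ↦ by apply Complex.ext <;> simp [Complex.inner, hδp_eq, hq_re, hq] <;> ring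
  · exact Or.inr fun z ↦ by apply Complex.ext <;> simp [Complex.inner, hδp_eq, hq_re, hq] <;> ring

theorem norm_setIntegral_exp_inner_add_inner_mul_I {δ δp : ℂ} (hδ : ‖δ‖ = 1) (hδp : ‖δp‖ = 1)
    (horth : ⟪δ, δp⟫ = 0) (s : Set ℂ) (τ : ℝ) :
    ‖∫ z in s, exp (-τ * (⟪δ, z⟫ + ⟪δp, z⟫ * I))‖ = ‖∫ z in s, exp (-τ * (conj δ * z))‖ := by
  have hconj : ∀ w : ℂ, exp (-τ * conj w) = conj (exp (-τ * w)) := fun w ↦ by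
    rw [← Complex.exp_conj, map_mul, map_neg, Complex.conj_ofReal]
  rcases inner_add_inner_mul_I_eq_or hδ hδp horth with hphase | hphase <;> simp_rw [hphase]
  simp_rw [hconj, integral_conj, Complex.norm_conj]

theorem div_sq_mul_exp_neg_le {τ h ζ : ℝ} (hτ : 1 ≤ τ) (hh : 0 ≤ h) (hζ : 0 ≤ ζ) :
    (τ * h + 1) / τ ^ 2 * Real.exp (-(τ * ζ * h)) ≤
      (1 + h) / τ * Real.exp (-(1 / 2) * ζ * h * τ) := by
  have hτ0 : 0 < τ := by linarith
  gcongr ?_ * ?_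
  · rw [div_le_div_iff₀ (by positivity) hτ0]
    nlinarith
  · exact Real.exp_le_exp.2 (by nlinarith [mul_nonneg (mul_nonneg hζ hh) hτ0.le])

/-- Lower bound for the area integral of the CGO phase `e^{ρ·x}`, `ρ = -τ(d + i d⊥)`,
over the truncated planar sector `S_h = K ∩ B_h` with aperture in `(0, π)`:
`|∫_{S_h} e^{ρ·x} dx| ≥ C̃_S/τ² - (C'/τ) e^{-(1/2)ζhτ}` for sufficiently large `τ`,
with `C̃_S > 0` depending only on the opening angle and `ζ`. -/
theorem area_integral_lower_bound_sector (θm θM : ℝ) (hm : -Real.pi < θm)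
    (hmM : θm < θM) (hM : θM < Real.pi) (haper : θM - θm < Real.pi)
    (K : Set (EuclideanSpace ℝ (Fin 2)))
    (hK : K = {x | θm < Complex.arg ((x 0 : ℂ) + (x 1 : ℂ) * Complex.I) ∧
                   Complex.arg ((x 0 : ℂ) + (x 1 : ℂ) * Complex.I) < θM})
    (d dp : EuclideanSpace ℝ (Fin 2)) (hd : ‖d‖ = 1) (hdp : ‖dp‖ = 1)
    (horth : ⟪d, dp⟫ = 0) (ζ : ℝ) (hζ : 0 < ζ)
    (hsep : ∀ x ∈ closure K, ‖x‖ = 1 → ζ < ⟪d, x⟫)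
    (h : ℝ) (hh : 0 < h) :
    ∃ C > 0, ∃ C' : ℝ, ∃ T : ℝ, ∀ τ : ℝ, T ≤ τ →
      C / τ ^ 2 - C' / τ * Real.exp (-(1 / 2) * ζ * h * τ) ≤
        ‖∫ x in K ∩ Metric.ball 0 h,
          Complex.exp (-(τ : ℂ) * ((⟪d, x⟫ : ℂ) + (⟪dp, x⟫ : ℂ) * Complex.I))‖ := by
  set e : EuclideanSpace ℝ (Fin 2) ≃ₗᵢ[ℝ] ℂ := Complex.orthonormalBasisOneI.repr.symm
  have hinner : ∀ x y, ⟪x, y⟫ = ⟪e x, e y⟫ := fun x y ↦ (e.inner_map_map x y).symm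
  have hKe : K = e ⁻¹' (arg ⁻¹' Ioo θm θM) := by
    rw [hK]; ext x; simp [e, Complex.orthonormalBasisOneI_repr_symm_apply]
  have hζu := le_re_conj_mul_exp_mul_I_of_lt_inner hm.le hmM hM.le fun z hz hz1 ↦ by
    have hmem : e.symm z ∈ K := by rwa [hKe, mem_preimage, e.apply_symm_apply]
    simpa only [hinner, e.apply_symm_apply] using
      hsep _ (subset_closure hmem) (by rwa [e.symm.norm_map])
  have hsin := Real.sin_pos_of_pos_of_lt_pi (sub_pos.2 hmM) haper
  refine ⟨Real.sin (θM - θm), hsin, (θM - θm) * (1 + h), 1, fun τ hτ ↦ ?_⟩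
  have htransfer : ∫ x in K ∩ Metric.ball 0 h, exp (-τ * (⟪d, x⟫ + ⟪dp, x⟫ * I)) =
      ∫ z in truncatedSector θm θM h, exp (-τ * (⟪e d, z⟫ + ⟪e dp, z⟫ * I)) := by
    have hS : K ∩ Metric.ball 0 h = e ⁻¹' truncatedSector θm θM h := by
      rw [hKe]; ext x; simp [truncatedSector]
    simp_rw [hinner d, hinner dp, hS]
    exact e.measurePreserving.setIntegral_preimage_emb e.toHomeomorph.measurableEmbedding
      (fun z ↦ exp (-τ * (⟪e d, z⟫ + ⟪e dp, z⟫ * I))) _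
  rw [htransfer, norm_setIntegral_exp_inner_add_inner_mul_I (by rwa [e.norm_map])
    (by rwa [e.norm_map]) (by rwa [hinner] at horth)]
  refine le_trans ?_ (le_norm_setIntegral_truncatedSector_exp hm.le hmM.le hM.le hh.le
    (by linarith) (by rw [Complex.norm_conj, e.norm_map, hd]) hζu)
  rw [abs_of_pos hsin, mul_div_assoc, mul_assoc]
  exact sub_le_sub_left (mul_le_mul_of_nonneg_left (div_sq_mul_exp_neg_le hτ hh.le hζ.le)
    (sub_nonneg.2 hmM.le)) _
end
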